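/- Fix n ≥ 1 and let Q(λ) = A_n λⁿ + A_{n−1} λ^{n−1} + ⋯ + A_1 λ + A_0 be a random real polynomial whose n+1 coefficients A_0, …, A_n are i.i.d. standard normal random variables. Then for every k with 0 ≤ k ≤ n, P(N⁻(Q) = k) = P(N⁻(Q) = n − k). -/

import Mathlib

open Polynomial MeasureTheory ProbabilityTheory

/-- The number of complex roots, counted with multiplicity, of a real polynomial
that have negative real part. -/
noncomputable def negRootCount (q : Polynomial ℝ) : ℕ :=
  Multiset.card ((q.map (algebraMap ℝ ℂ)).roots.filter fun z => z.re < 0)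

/-- The random real polynomial `∑_{i=0}^{n} ω_i λ^i` built from coefficients `ω`. -/
noncomputable def polyOfCoeffs {n : ℕ} (ω : Fin (n + 1) → ℝ) : Polynomial ℝ :=
  ∑ i : Fin (n + 1), Polynomial.C (ω i) * Polynomial.X ^ (i : ℕ)

/-!
Substituting `λ ↦ -λ` turns `Q` into the polynomial with coefficients `(-1)^i A_i`, which has the
same law because each `A_i` is symmetric, and it reflects the roots of `Q` across the imaginary
axis. Almost surely `A_n ≠ 0` and `Q` has no root on the imaginary axis, so that
`N⁻(Q(-λ)) = n - N⁻(Q)`. For the second point write `Q = A_0 + λ P`: if `iy` is a root, then so is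
its conjugate `-iy`, hence `iy` is a root of `λ (P(λ) + P(-λ))`, which is a nonzero polynomial when
`A_1 ≠ 0`. So for fixed `A_1 ≠ 0, A_2, …, A_n` only finitely many values of `A_0` are bad, and
Fubini concludes.
-/

theorem coeff_polyOfCoeffs {n : ℕ} (ω : Fin (n + 1) → ℝ) (i : Fin (n + 1)) :
    (polyOfCoeffs ω).coeff i = ω i := by
  simp [polyOfCoeffs, Fin.val_inj]

theorem natDegree_polyOfCoeffs {n : ℕ} {ω : Fin (n + 1) → ℝ} (h : ω (Fin.last n) ≠ 0) :
    (polyOfCoeffs ω).natDegree = n := by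
  refine le_antisymm (natDegree_sum_le_of_forall_le _ _ fun i _ => ?_) ?_
  · exact (natDegree_C_mul_X_pow_le _ _).trans (Fin.is_le i)
  · exact le_natDegree_of_ne_zero (by simpa using (coeff_polyOfCoeffs ω (Fin.last n)).trans_ne h)

theorem eval_zero_polyOfCoeffs {n : ℕ} (ω : Fin (n + 1) → ℝ) :
    (polyOfCoeffs ω).eval 0 = ω 0 := by
  rw [← coeff_zero_eq_eval_zero]
  exact coeff_polyOfCoeffs ω 0

theorem aeval_polyOfCoeffs {n : ℕ} (ω : Fin (n + 1) → ℝ) (z : ℂ) :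
    aeval z (polyOfCoeffs ω) = ∑ i, ω i * z ^ (i : ℕ) := by
  simp [polyOfCoeffs]

theorem polyOfCoeffs_cons {n : ℕ} (x : ℝ) (v : Fin (n + 1) → ℝ) :
    polyOfCoeffs (Fin.cons x v : Fin (n + 2) → ℝ) = C x + X * polyOfCoeffs v := by
  rw [polyOfCoeffs, polyOfCoeffs, Fin.sum_univ_succ, Finset.mul_sum]
  simp only [Fin.cons_zero, Fin.cons_succ, Fin.val_zero, Fin.val_succ, pow_zero, mul_one]
  congr 1
  exact Finset.sum_congr rfl fun i _ => by ring

theorem polyOfCoeffs_comp_neg_X {n : ℕ} (ω : Fin (n + 1) → ℝ) :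
    (polyOfCoeffs ω).comp (-X) = polyOfCoeffs fun i => (-1) ^ (i : ℕ) * ω i := by
  rw [polyOfCoeffs, polyOfCoeffs, sum_comp]
  refine Finset.sum_congr rfl fun i _ => ?_
  rw [mul_comp, C_comp, X_pow_comp, neg_pow, C_mul, C_pow, C_neg, C_1]
  ring

theorem negRootCount_comp_neg_X_add_negRootCount (q : ℝ[X])
    (hq : ∀ z : ℂ, z.re = 0 → aeval z q ≠ 0) :
    negRootCount (q.comp (-X)) + negRootCount q = q.natDegree := by
  set p := q.map (algebraMap ℝ ℂ) with hp_def
  have hq' : ∀ z : ℂ, z.re = 0 → ¬ p.IsRoot z := fun z hz => by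
    rw [IsRoot, hp_def, eval_map_algebraMap]
    exact hq z hz
  have hp : p ≠ 0 := fun h => hq' 0 rfl (by simp [h])
  have hre : ∀ z ∈ p.roots, ¬ 0 < z.re ↔ z.re < 0 := fun z hz => by
    have : z.re ≠ 0 := fun h0 => hq' z h0 ((mem_roots hp).mp hz)
    rw [not_lt]
    exact ⟨fun h => h.lt_of_ne this, le_of_lt⟩
  have hpos : negRootCount (q.comp (-X)) = Multiset.card (p.roots.filter fun z => 0 < z.re) := by
    rw [negRootCount, Polynomial.map_comp, Polynomial.map_neg, map_X, roots_comp_neg_X,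
      Multiset.filter_map, Multiset.card_map]
    simp only [Function.comp_def, Complex.neg_re, Left.neg_neg_iff]
    rfl
  rw [hpos, negRootCount, ← Multiset.filter_congr hre, ← Multiset.card_add,
    Multiset.filter_add_not, IsAlgClosed.card_roots_eq_natDegree, natDegree_map]

theorem finite_setOf_exists_root_re_eq_zero_C_add_X_mul {p : ℝ[X]} (hp : p.eval 0 ≠ 0) :
    {x : ℝ | ∃ z : ℂ, z.re = 0 ∧ aeval z (C x + X * p) = 0}.Finite := by
  set D := X * (p + p.comp (-X))
  have hD : D ≠ 0 := mul_ne_zero X_ne_zero fun h => hp (by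
    have := congrArg (eval 0) h
    simp only [eval_add, eval_comp, eval_neg, eval_X, neg_zero, eval_zero] at this
    linarith)
  refine ((D.aroots ℂ).toFinset.finite_toSet.image fun z => (-(z * aeval z p)).re).subset ?_
  rintro x ⟨z, hz, hx⟩
  simp only [map_add, aeval_C, map_mul, aeval_X, Complex.coe_algebraMap] at hx
  have hconj : (starRingEnd ℂ) z = -z := by
    apply Complex.ext <;> simp [hz]
  have hx' : (x : ℂ) + -z * aeval (-z) p = 0 := by
    have := congrArg (starRingEnd ℂ) hx
    rwa [map_add, map_mul, Complex.conj_ofReal, hconj, ← aeval_conj, hconj, map_zero] at this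
  refine ⟨z, ?_, ?_⟩
  · rw [Finset.mem_coe, Multiset.mem_toFinset, mem_aroots',
      Polynomial.map_ne_zero_iff (algebraMap ℝ ℂ).injective]
    refine ⟨hD, ?_⟩
    simp only [D, map_mul, map_add, aeval_X, aeval_comp, map_neg]
    linear_combination hx - hx'
  · simp only [← eq_neg_of_add_eq_zero_left hx, Complex.ofReal_re]

theorem IsSigmaCompact.measurableSet {α : Type*} [TopologicalSpace α] [T2Space α]
    [MeasurableSpace α] [OpensMeasurableSpace α] {s : Set α} (hs : IsSigmaCompact s) :
    MeasurableSet s := by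
  obtain ⟨K, hK, rfl⟩ := hs
  exact .iUnion fun n => (hK n).measurableSet

theorem measurableSet_setOf_exists_root_re_eq_zero (n : ℕ) :
    MeasurableSet {ω : Fin (n + 1) → ℝ | ∃ z : ℂ, z.re = 0 ∧ aeval z (polyOfCoeffs ω) = 0} := by
  have hclosed : IsClosed
      {p : (Fin (n + 1) → ℝ) × ℂ | p.2.re = 0 ∧ aeval p.2 (polyOfCoeffs p.1) = 0} := by
    simp only [aeval_polyOfCoeffs]
    exact (isClosed_eq (by fun_prop) (by fun_prop)).inter (isClosed_eq (by fun_prop) (by fun_prop))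
  convert ((isSigmaCompact_univ.of_isClosed_subset hclosed (Set.subset_univ _)).image
    continuous_fst).measurableSet
  ext ω
  simp

theorem ae_forall_re_eq_zero_aeval_polyOfCoeffs_ne_zero {n : ℕ} (μ : Fin (n + 2) → Measure ℝ)
    [∀ i, SigmaFinite (μ i)] [∀ i, NullSingletonClass (μ i)] :
    ∀ᵐ ω ∂Measure.pi μ, ∀ z : ℂ, z.re = 0 → aeval z (polyOfCoeffs ω) ≠ 0 := by
  set S := {ω : Fin (n + 2) → ℝ | ∃ z : ℂ, z.re = 0 ∧ aeval z (polyOfCoeffs ω) = 0}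
  suffices Measure.pi μ S = 0 by
    filter_upwards [measure_eq_zero_iff_ae_notMem.mp this] with ω hω z hz h
    exact hω ⟨z, hz, h⟩
  set e := MeasurableEquiv.piFinSuccAbove (fun _ => ℝ) 0
  have hS : MeasurableSet (e.symm ⁻¹' S) :=
    e.symm.measurable (measurableSet_setOf_exists_root_re_eq_zero _)
  rw [← (measurePreserving_piFinSuccAbove μ 0).symm.measure_preimage_equiv,
    Measure.prod_apply_symm hS]
  refine (lintegral_congr_ae ?_).trans lintegral_zero
  filter_upwards [Measure.ae_eval_ne _ 0 0] with v hv
  have hsection : (fun x => (x, v)) ⁻¹' (e.symm ⁻¹' S)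
      = {x : ℝ | ∃ z : ℂ, z.re = 0 ∧ aeval z (C x + X * polyOfCoeffs v) = 0} := by
    ext x
    change (∃ z : ℂ, z.re = 0 ∧ aeval z (polyOfCoeffs (Fin.insertNth 0 x v)) = 0) ↔ _
    rw [Fin.insertNth_zero', polyOfCoeffs_cons]
    rfl
  rw [hsection]
  exact (finite_setOf_exists_root_re_eq_zero_C_add_X_mul
    (by rwa [eval_zero_polyOfCoeffs])).measure_zero _

noncomputable def altSignEquiv (n : ℕ) : (Fin (n + 1) → ℝ) ≃ᵐ (Fin (n + 1) → ℝ) :=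
  MeasurableEquiv.piCongrRight fun i =>
    (Homeomorph.mulLeft₀ ((-1 : ℝ) ^ (i : ℕ)) (by simp)).toMeasurableEquiv

theorem altSignEquiv_apply {n : ℕ} (ω : Fin (n + 1) → ℝ) :
    altSignEquiv n ω = fun i : Fin (n + 1) => (-1) ^ (i : ℕ) * ω i := rfl

theorem measurePreserving_altSignEquiv {n : ℕ} (μ : Fin (n + 1) → Measure ℝ)
    [∀ i, SigmaFinite (μ i)] [∀ i, (μ i).IsNegInvariant] :
    MeasurePreserving (altSignEquiv n) (Measure.pi μ) (Measure.pi μ) := by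
  refine measurePreserving_pi μ μ fun i => ?_
  rcases neg_one_pow_eq_or ℝ (i : ℕ) with h | h
  · convert MeasurePreserving.id (μ i)
    ext x
    change (-1) ^ (i : ℕ) * x = x
    rw [h, one_mul]
  · convert Measure.measurePreserving_neg (μ i)
    ext x
    change (-1) ^ (i : ℕ) * x = -x
    rw [h, neg_one_mul]

instance isNegInvariant_gaussianReal (v : NNReal) : (gaussianReal 0 v).IsNegInvariant :=
  ⟨gaussianReal_map_neg.trans (by rw [neg_zero])⟩

theorem measure_negRootCount_eq_measure_negRootCount_sub {n k : ℕ}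
    (μ : Fin (n + 1) → Measure ℝ)
    [∀ i, SigmaFinite (μ i)] [∀ i, NullSingletonClass (μ i)] [∀ i, (μ i).IsNegInvariant]
    (hk : k ≤ n) :
    Measure.pi μ {ω | negRootCount (polyOfCoeffs ω) = k}
      = Measure.pi μ {ω | negRootCount (polyOfCoeffs ω) = n - k} := by
  rcases n with _ | n
  · obtain rfl : k = 0 := Nat.le_zero.mp hk
    rfl
  have hsum : ∀ᵐ ω ∂Measure.pi μ,
      negRootCount (polyOfCoeffs (altSignEquiv _ ω)) + negRootCount (polyOfCoeffs ω) = n + 1 := by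
    filter_upwards [Measure.ae_eval_ne μ (Fin.last _) 0,
      ae_forall_re_eq_zero_aeval_polyOfCoeffs_ne_zero μ] with ω hlast himag
    rw [altSignEquiv_apply, ← polyOfCoeffs_comp_neg_X,
      negRootCount_comp_neg_X_add_negRootCount _ himag, natDegree_polyOfCoeffs hlast]
  calc Measure.pi μ {ω | negRootCount (polyOfCoeffs ω) = k}
      = Measure.pi μ (altSignEquiv _ ⁻¹' {ω | negRootCount (polyOfCoeffs ω) = n + 1 - k}) := by
        refine measure_congr (Filter.eventuallyEq_set.mpr ?_)
        filter_upwards [hsum] with ω hω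
        change negRootCount (polyOfCoeffs ω) = k
          ↔ negRootCount (polyOfCoeffs (altSignEquiv _ ω)) = n + 1 - k
        omega
    _ = _ := (measurePreserving_altSignEquiv μ).measure_preimage_equiv _

theorem stmt_7_general (n : ℕ) (k : ℕ) (hk : k ≤ n) :
    (Measure.pi fun _ : Fin (n + 1) => gaussianReal 0 1)
        {ω | negRootCount (polyOfCoeffs ω) = k}
      = (Measure.pi fun _ : Fin (n + 1) => gaussianReal 0 1)
        {ω | negRootCount (polyOfCoeffs ω) = n - k} :=
  have := nullSingletonClass_gaussianReal (μ := 0) one_ne_zero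
  measure_negRootCount_eq_measure_negRootCount_sub _ hk

/-- For a random real polynomial of degree `n ≥ 1` with i.i.d. standard normal
coefficients, `P(N⁻(Q) = k) = P(N⁻(Q) = n - k)` for every `0 ≤ k ≤ n`. -/
theorem stmt_7 (n : ℕ) (hn : 1 ≤ n) (k : ℕ) (hk : k ≤ n) :
    (Measure.pi fun _ : Fin (n + 1) => gaussianReal 0 1)
        {ω | negRootCount (polyOfCoeffs ω) = k}
      = (Measure.pi fun _ : Fin (n + 1) => gaussianReal 0 1)
        {ω | negRootCount (polyOfCoeffs ω) = n - k} :=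
  stmt_7_general n k hk
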